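/- Let W be an isometry on ℓ²(ℕ) commuting with a weighted shift T (T eₙ = λₙ e_{n+1}) whose weights satisfy 0 < λₙ < λ_{n+1} for all n (strictly increasing). Then W e₀ = c e₀ for some scalar c with |c| = 1, and consequently W is a unimodular scalar multiple of the identity. -/

import Mathlib

/-!
Since `‖T g‖² = ∑ λₘ² ‖gₘ‖²` and `λ₀ < λₘ` for `m ≥ 1`, the only vectors with `‖T g‖ = λ₀ ‖g‖`
are the multiples of `e₀`. The isometry `W` commutes with `T`, so `W e₀` is such a vector:
`W e₀ = c e₀`. Transporting this along `T eₙ = λₙ eₙ₊₁` with `λₙ ≠ 0` gives `W eₙ = c eₙ` for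
all `n`, hence `W = c • 1`.
-/

open scoped lp

namespace lp

theorem hasSum_norm_sq {ι : Type*} {E : ι → Type*} [∀ i, NormedAddCommGroup (E i)] (f : lp E 2) :
    HasSum (fun i => ‖f i‖ ^ 2) (‖f‖ ^ 2) := by
  simpa using lp.hasSum_norm (p := 2) (by norm_num) f

theorem ext_single_one {ι 𝕜 F : Type*} [RCLike 𝕜] [DecidableEq ι] [AddCommMonoid F] [Module 𝕜 F]
    [TopologicalSpace F] [T2Space F] ⦃f g : ℓ²(ι, 𝕜) →L[𝕜] F⦄
    (h : ∀ i, f (lp.single 2 i 1) = g (lp.single 2 i 1)) :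
    f = g :=
  lp.ext_continuousLinearMap ENNReal.ofNat_ne_top fun i => ContinuousLinearMap.ext_ring (h i)

end lp

variable {𝕜 : Type*} [RCLike 𝕜]

def IsWeightedShift (lam : ℕ → ℝ) (T : ℓ²(ℕ, 𝕜) →L[𝕜] ℓ²(ℕ, 𝕜)) : Prop :=
  ∀ n, T (lp.single 2 n 1) = (lam n : 𝕜) • lp.single 2 (n + 1) 1

namespace IsWeightedShift

variable {lam : ℕ → ℝ} {T : ℓ²(ℕ, 𝕜) →L[𝕜] ℓ²(ℕ, 𝕜)}

theorem apply_zero (hT : IsWeightedShift lam T) (g : ℓ²(ℕ, 𝕜)) : T g 0 = 0 := by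
  suffices lp.evalCLM 𝕜 _ 2 0 ∘L T = 0 from congr($this g)
  refine lp.ext_single_one fun n => ?_
  simp [lp.evalCLM, hT n, lp.single_apply]

theorem apply_succ (hT : IsWeightedShift lam T) (g : ℓ²(ℕ, 𝕜)) (m : ℕ) :
    T g (m + 1) = lam m * g m := by
  suffices lp.evalCLM 𝕜 _ 2 (m + 1) ∘L T = (lam m : 𝕜) • lp.evalCLM 𝕜 _ 2 m from congr($this g)
  refine lp.ext_single_one fun n => ?_
  rcases eq_or_ne m n with rfl | hmn <;> simp [lp.evalCLM, hT _, *]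

theorem hasSum_norm_sq (hT : IsWeightedShift lam T) (g : ℓ²(ℕ, 𝕜)) :
    HasSum (fun m => lam m ^ 2 * ‖g m‖ ^ 2) (‖T g‖ ^ 2) := by
  have h := (hasSum_nat_add_iff' 1).mpr (lp.hasSum_norm_sq (T g))
  simp only [hT.apply_zero, norm_zero, Finset.range_one, Finset.sum_singleton, sub_zero,
    zero_pow two_ne_zero] at h
  refine h.congr_fun fun m => ?_
  rw [hT.apply_succ, norm_mul, RCLike.norm_ofReal, mul_pow, sq_abs]

theorem eq_smul_single_zero_of_norm_eq (hT : IsWeightedShift lam T) (h0 : 0 ≤ lam 0)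
    (hmono : StrictMono lam) {g : ℓ²(ℕ, 𝕜)} (hg : ‖T g‖ = lam 0 * ‖g‖) :
    g = g 0 • lp.single 2 0 1 := by
  have hgap : ∀ m, m ≠ 0 → lam 0 ^ 2 < lam m ^ 2 := fun m hm =>
    pow_lt_pow_left₀ (hmono (Nat.pos_of_ne_zero hm)) h0 two_ne_zero
  have hsum : HasSum (fun m => (lam m ^ 2 - lam 0 ^ 2) * ‖g m‖ ^ 2) 0 := by
    have := (hT.hasSum_norm_sq g).sub ((lp.hasSum_norm_sq g).mul_left (lam 0 ^ 2))
    rw [hg, mul_pow, sub_self] at this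
    simpa only [sub_mul] using this
  have hnonneg : ∀ m, 0 ≤ (lam m ^ 2 - lam 0 ^ 2) * ‖g m‖ ^ 2 := fun m => by
    rcases eq_or_ne m 0 with rfl | hm
    · simp
    · exact mul_nonneg (sub_nonneg.2 (hgap m hm).le) (sq_nonneg _)
  have hzero := (hasSum_zero_iff_of_nonneg hnonneg).1 hsum
  ext m
  rcases eq_or_ne m 0 with rfl | hm
  · simp
  · have := congr_fun hzero m
    simpa [lp.single_apply, hm, (sub_pos.2 (hgap m hm)).ne'] using this

theorem eq_smul_one_of_commute (hT : IsWeightedShift lam T) (hne : ∀ n, lam n ≠ 0)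
    {W : ℓ²(ℕ, 𝕜) →L[𝕜] ℓ²(ℕ, 𝕜)} (hWT : Commute W T) {c : 𝕜}
    (hc : W (lp.single 2 0 1) = c • lp.single 2 0 1) : W = c • 1 := by
  refine lp.ext_single_one fun n => ?_
  simp only [smul_apply, one_apply_eq_self]
  induction n with
  | zero => exact hc
  | succ n ih =>
    have h := congr($hWT.eq (lp.single 2 n 1))
    simp only [mul_apply_eq_comp, hT n, map_smul, ih] at h
    exact smul_right_injective _ (RCLike.ofReal_ne_zero (K := 𝕜) |>.2 (hne n))
      (h.trans (smul_comm _ _ _))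

end IsWeightedShift

theorem stmt7_general (lam : ℕ → ℝ) (hpos : ∀ n, 0 < lam n) (hmono : ∀ n, lam n < lam (n + 1))
    (T : lp (fun _ : ℕ => ℂ) 2 →L[ℂ] lp (fun _ : ℕ => ℂ) 2)
    (hT : ∀ n : ℕ, T (lp.single 2 n (1:ℂ)) = (lam n : ℂ) • lp.single 2 (n + 1) (1:ℂ))
    (W : lp (fun _ : ℕ => ℂ) 2 →ₗᵢ[ℂ] lp (fun _ : ℕ => ℂ) 2)
    (hWT : ∀ f, W (T f) = T (W f)) :
    ∃ c : ℂ, ‖c‖ = 1 ∧ W (lp.single 2 0 (1:ℂ)) = c • lp.single 2 0 (1:ℂ) ∧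
      ∀ f, W f = c • f := by
  have hshift : IsWeightedShift lam T := hT
  set e₀ : ℓ²(ℕ, ℂ) := lp.single 2 0 1
  have he₀ : ‖e₀‖ = 1 := by simp [e₀, lp.norm_single]
  have hnorm : ‖T (W e₀)‖ = lam 0 * ‖W e₀‖ := by
    rw [← hWT, W.norm_map, W.norm_map, hT 0, norm_smul, lp.norm_single two_pos, he₀,
      Complex.norm_real, Real.norm_of_nonneg (hpos 0).le, norm_one]
  have hW₀ : W e₀ = W e₀ 0 • e₀ :=
    hshift.eq_smul_single_zero_of_norm_eq (hpos 0).le (strictMono_nat_of_lt_succ hmono) hnorm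
  have hc : ‖W e₀ 0‖ = 1 := by
    simpa [he₀, norm_smul] using (congrArg norm hW₀).symm.trans (W.norm_map e₀)
  have hW : W.toContinuousLinearMap = W e₀ 0 • 1 :=
    hshift.eq_smul_one_of_commute (fun n => (hpos n).ne') (ContinuousLinearMap.ext hWT) hW₀
  exact ⟨W e₀ 0, hc, hW₀, fun f => congr($hW f)⟩

/-- Let `T` be the weighted shift on `ℓ²(ℕ)` with strictly increasing positive weights
(`T eₙ = λₙ e_{n+1}`, `0 < λₙ < λ_{n+1}`).  If `W` is a surjective isometry (unitary) on
`ℓ²(ℕ)` commuting with `T`, then `W e₀ = c e₀` for a unimodular scalar `c`, and `W` is the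
scalar `c` times the identity. -/
theorem stmt7 (lam : ℕ → ℝ) (hpos : ∀ n, 0 < lam n) (hmono : ∀ n, lam n < lam (n + 1))
    (T : lp (fun _ : ℕ => ℂ) 2 →L[ℂ] lp (fun _ : ℕ => ℂ) 2)
    (hT : ∀ n : ℕ, T (lp.single 2 n (1:ℂ)) = (lam n : ℂ) • lp.single 2 (n + 1) (1:ℂ))
    (W : lp (fun _ : ℕ => ℂ) 2 →ₗᵢ[ℂ] lp (fun _ : ℕ => ℂ) 2)
    (hWsurj : Function.Surjective W)
    (hWT : ∀ f, W (T f) = T (W f)) :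
    ∃ c : ℂ, ‖c‖ = 1 ∧ W (lp.single 2 0 (1:ℂ)) = c • lp.single 2 0 (1:ℂ) ∧
      ∀ f, W f = c • f :=
  stmt7_general lam hpos hmono T hT W hWT
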